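/- arXiv:2504.15640 — 2 statements merged into one kernel-verified Lean document; each statement's English description precedes it below -/
import Mathlib

section
/- Let n and N be natural numbers and let w : ℕ → ℝ be strictly antitone (strictly decreasing). Let A be the set of ordered pairs (a,b) of natural numbers with 1 ≤ a < b ≤ n, and for a pair (a,b) define its SEC score as w(a) + w(b). If S ⊆ A is a finite set with |S| = N that maximizes the total SEC score Σ_{(a,b)∈S} (w(a) + w(b)) among all N-element subsets of A, then every pair (a,b) ∈ S satisfies a ≤ ⌈(√(8N+1) − 1)/2⌉ (where √ is the real square root and ⌈·⌉ is the ceiling). -/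
/-!
If a maximizing set `S` contained a pair `(a, b)` with `a > m := ⌈(√(8N+1) - 1)/2⌉`, then the
`a.choose 2 ≥ m(m+1)/2 ≥ N` pairs `x < y ≤ a` could not all lie in `S \ {(a, b)}`. Exchanging
`(a, b)` for a missing one `(x, y)` strictly raises the score, since `x < a` and `y ≤ a < b`.
-/

open Finset

theorem apply_le_apply_of_sum_maximal {α M : Type*} [DecidableEq α] [AddCommMonoid M]
    [PartialOrder M] [IsOrderedCancelAddMonoid M] {f : α → M} {A S : Finset α} (hS : S ⊆ A)
    (hmax : ∀ S' ⊆ A, #S' = #S → ∑ x ∈ S', f x ≤ ∑ x ∈ S, f x)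
    {p q : α} (hp : p ∈ S) (hqA : q ∈ A) (hqS : q ∉ S) : f q ≤ f p := by
  have hq : q ∉ S.erase p := fun h => hqS (mem_of_mem_erase h)
  have hle := hmax (insert q (S.erase p)) (insert_subset hqA ((erase_subset p S).trans hS))
    (by rw [card_insert_of_notMem hq, card_erase_add_one hp])
  rw [sum_insert hq, ← add_sum_erase S f hp] at hle
  exact le_of_add_le_add_right hle

theorem le_choose_two_of_ceil_lt {N a : ℕ}
    (h : ⌈(Real.sqrt (8 * N + 1) - 1) / 2⌉ < (a : ℤ)) : N ≤ a.choose 2 := by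
  have hceil : (Real.sqrt (8 * N + 1) - 1) / 2 ≤ a - 1 := by
    exact_mod_cast Int.ceil_le.mp (Int.le_sub_one_of_lt h)
  obtain ⟨-, hsq⟩ := Real.sqrt_le_iff.mp (show Real.sqrt (8 * N + 1) ≤ 2 * a - 1 by linarith)
  have hreal : (N : ℝ) ≤ a.choose 2 := by
    rw [Nat.cast_choose_two]
    nlinarith
  exact_mod_cast hreal

/-- In any SEC-score-maximizing `N`-element set `S` of pairs `(a,b)` with
`1 ≤ a < b ≤ n` (score of a pair being `w a + w b` for strictly antitone `w`),
every pair `(a,b) ∈ S` satisfies `a ≤ ⌈(√(8N+1) − 1)/2⌉`. -/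
theorem stmt_0 (n N : ℕ) (w : ℕ → ℝ) (hw : StrictAnti w)
    (A : Finset (ℕ × ℕ))
    (hA : A = (Finset.Icc 1 n ×ˢ Finset.Icc 1 n).filter fun p => p.1 < p.2)
    (S : Finset (ℕ × ℕ)) (hS : S ⊆ A) (hcard : S.card = N)
    (hmax : ∀ S' ⊆ A, S'.card = N →
      ∑ p ∈ S', (w p.1 + w p.2) ≤ ∑ p ∈ S, (w p.1 + w p.2)) :
    ∀ p ∈ S, (p.1 : ℤ) ≤ ⌈(Real.sqrt (8 * N + 1) - 1) / 2⌉ := by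
  rintro ⟨a, b⟩ hp
  by_contra! hlt
  have hpA := hS hp
  simp only [hA, mem_filter, mem_product, mem_Icc] at hpA
  set P := (Icc 1 a ×ˢ Icc 1 a).filter fun p : ℕ × ℕ => p.1 < p.2
  have hPA : P ⊆ A := hA ▸ filter_subset_filter _
    (product_subset_product (Icc_subset_Icc_right hpA.1.1.2) (Icc_subset_Icc_right hpA.1.1.2))
  have hsmall : #(S.erase (a, b)) < #P := by
    have hN := le_choose_two_of_ceil_lt (a := a) hlt
    have hS0 := card_pos.mpr ⟨_, hp⟩
    rw [card_erase_of_mem hp, card_product_filter_lt, Nat.card_Icc, Nat.add_sub_cancel]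
    omega
  obtain ⟨⟨x, y⟩, hq, hqS⟩ := exists_mem_notMem_of_card_lt_card hsmall
  simp only [P, mem_filter, mem_product, mem_Icc] at hq
  have hqS : (x, y) ∉ S := fun h => hqS (mem_erase.mpr ⟨by grind, h⟩)
  have hle := apply_le_apply_of_sum_maximal (f := fun p : ℕ × ℕ => w p.1 + w p.2) hS
    (hcard ▸ hmax) hp (hPA (by simp [P, hq])) hqS
  have hx : w a < w x := hw (by omega)
  have hy : w b < w y := hw (by omega)
  simp only at hle
  linarith
end

section
/- Let n be a natural number and let w : ℕ → ℝ be strictly antitone. For any pair (a,b) with 1 ≤ a < b ≤ n, the number of pairs (a',b') with 1 ≤ a' < b' ≤ n, (a',b') ≠ (a,b), and w(a') + w(b') > w(a) + w(b) is at least a(a+1)/2 − 1. -/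
/-!
Every pair `(x, y)` with `1 ≤ x < y ≤ a + 1` other than `(a, b)` has `x ≤ a` and `y ≤ a + 1 ≤ b`,
with one of the two inequalities `x < a`, `y < b` strict, so it beats `(a, b)` because `w` is
strictly antitone. There are `(a + 1).choose 2 = a(a+1)/2` such pairs.
-/

open Finset

theorem StrictAnti.add_lt_add_of_le_of_ne {α β : Type*} [PartialOrder α] [AddCommMonoid β]
    [PartialOrder β] [IsOrderedCancelAddMonoid β] {w : α → β} (hw : StrictAnti w)
    {a b x y : α} (hx : x ≤ a) (hy : y ≤ b) (hne : (x, y) ≠ (a, b)) :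
    w a + w b < w x + w y := by
  rcases hx.lt_or_eq with hx | rfl
  · exact add_lt_add_of_lt_of_le (hw hx) (hw.antitone hy)
  · have hy : y < b := hy.lt_of_ne fun h => hne (by rw [h])
    exact add_lt_add_right (hw hy) (w x)

theorem stmt_1_general (n : ℕ) (w : ℕ → ℝ) (hw : StrictAnti w)
    (a b : ℕ) (hab : a < b) (hb : b ≤ n) :
    a * (a + 1) / 2 - 1 ≤
      (((Finset.Icc 1 n ×ˢ Finset.Icc 1 n).filter fun p =>
        p.1 < p.2 ∧ p ≠ (a, b) ∧ w a + w b < w p.1 + w p.2).card) := by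
  set S := {p ∈ Icc 1 (a + 1) ×ˢ Icc 1 (a + 1) | p.1 < p.2}
  have hcard : #S = a * (a + 1) / 2 := by
    rw [card_product_filter_lt, Nat.card_Icc, Nat.add_sub_cancel, Nat.choose_two_right,
      Nat.add_sub_cancel, Nat.mul_comm]
  have hsub : S.erase (a, b) ⊆ {p ∈ Icc 1 n ×ˢ Icc 1 n |
      p.1 < p.2 ∧ p ≠ (a, b) ∧ w a + w b < w p.1 + w p.2} := by
    intro p hp
    obtain ⟨hne, hpS⟩ := mem_erase.1 hp
    simp only [S, mem_filter, mem_product, mem_Icc] at hpS ⊢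
    have hbeats := hw.add_lt_add_of_le_of_ne (x := p.1) (y := p.2) (by omega) (by omega) hne
    exact ⟨⟨⟨by omega, by omega⟩, by omega, by omega⟩, hpS.2, hne, hbeats⟩
  calc a * (a + 1) / 2 - 1 = #S - 1 := by rw [hcard]
    _ ≤ #(S.erase (a, b)) := pred_card_le_card_erase
    _ ≤ _ := card_le_card hsub

/-- For strictly antitone `w` and a pair `(a,b)` with `1 ≤ a < b ≤ n`,
the number of pairs `(a',b')` with `1 ≤ a' < b' ≤ n`, `(a',b') ≠ (a,b)`, and
`w a' + w b' > w a + w b` is at least `a(a+1)/2 − 1`. -/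
theorem stmt_1 (n : ℕ) (w : ℕ → ℝ) (hw : StrictAnti w)
    (a b : ℕ) (ha : 1 ≤ a) (hab : a < b) (hb : b ≤ n) :
    a * (a + 1) / 2 - 1 ≤
      (((Finset.Icc 1 n ×ˢ Finset.Icc 1 n).filter fun p =>
        p.1 < p.2 ∧ p ≠ (a, b) ∧ w a + w b < w p.1 + w p.2).card) :=
  stmt_1_general n w hw a b hab hb
end
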